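/- Let X be a uniformly discrete metric space with bounded geometry. Suppose that for all R, ε > 0 there exists a positive type kernel u : X×X → ℂ with (R,ε)-variation such that convolution with u, given by (u*ξ)(x) = Σ_{y∈X} u(x,y) ξ(y), defines a bounded operator on ℓ²(X) which belongs to the uniform Roe algebra C*_u(X). Then for all R, ε > 0 there exist unit vectors ξ_x ∈ ℓ²(X) (x ∈ X) with (R,ε)-variation and S > 0 such that the support of each ξ_x is contained in the closed ball of radius S about x. -/

import Mathlib

set_option maxRecDepth 8000
set_option maxHeartbeats 1000000
set_option linter.unusedSectionVars false

open Metric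
open scoped ComplexOrder

noncomputable section

def UniformlyDiscrete (X : Type*) [MetricSpace X] : Prop :=
  ∃ δ > (0:ℝ), ∀ x y : X, x ≠ y → δ ≤ dist x y

def BoundedGeometry (X : Type*) [MetricSpace X] : Prop :=
  ∀ R > (0:ℝ), ∃ N : ℕ, ∀ x : X,
    (closedBall x R).Finite ∧ (closedBall x R).ncard ≤ N

/-- The Hilbert space ℓ²(X). -/
abbrev ell2 (X : Type*) : Type _ := lp (fun _ : X => ℂ) 2

/-- The standard basis vector δ_x of ℓ²(X). -/
def delta {X : Type*} (x : X) : ell2 X :=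
  letI := Classical.decEq X
  lp.single 2 x (1 : ℂ)

/-- An operator on ℓ²(X) has propagation at most `S` if its matrix entries
vanish at distance greater than `S`. -/
def HasPropagationLE {X : Type*} [MetricSpace X]
    (T : ell2 X →L[ℂ] ell2 X) (S : ℝ) : Prop :=
  ∀ x y : X, S < dist x y → (inner ℂ (delta x) (T (delta y)) : ℂ) = 0

/-- The uniform Roe algebra: the norm closure of the finite propagation
operators on ℓ²(X). -/
def uniformRoeAlgebra (X : Type*) [MetricSpace X] : Set (ell2 X →L[ℂ] ell2 X) :=
  closure {T : ell2 X →L[ℂ] ell2 X | ∃ S : ℝ, HasPropagationLE T S}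

/-- A complex kernel of positive type. -/
def IsPositiveTypeKernelC {X : Type*} (u : X → X → ℂ) : Prop :=
  ∀ (n : ℕ) (x : Fin n → X) (c : Fin n → ℂ),
    0 ≤ ∑ i : Fin n, ∑ j : Fin n, (starRingEnd ℂ) (c i) * c j * u (x i) (x j)

/-! ### Auxiliary lemmas -/

section Aux

variable {X : Type} [MetricSpace X]

lemma delta_eq [DecidableEq X] (x : X) : delta x = lp.single 2 x (1:ℂ) := by
  unfold delta; congr!

lemma delta_apply_self (x : X) : (delta x : ∀ _ : X, ℂ) x = 1 := by
  classical
  rw [delta_eq]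
  exact lp.single_apply_self (E := fun _ : X => ℂ) 2 x (1:ℂ)

lemma delta_apply_ne {x y : X} (h : y ≠ x) : (delta x : ∀ _ : X, ℂ) y = 0 := by
  classical
  rw [delta_eq]
  exact lp.single_apply_ne (E := fun _ : X => ℂ) 2 x (1:ℂ) h

lemma norm_delta (x : X) : ‖delta x‖ = 1 := by
  classical
  rw [delta_eq]
  simpa using lp.norm_single (E := fun _ : X => ℂ) (p := 2) (by norm_num)
    (fun _ : X => (1:ℂ)) x

lemma inner_delta_left (z : X) (f : ell2 X) :
    (inner ℂ (delta z) f : ℂ) = (f : ∀ _ : X, ℂ) z := by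
  classical
  rw [delta_eq, lp.inner_single_left]
  simp

lemma apply_coord (f : ell2 X) (z : X) : (f : ∀ _ : X, ℂ) z = (inner ℂ (delta z) f : ℂ) :=
  (inner_delta_left z f).symm

lemma single_eq_smul_delta [DecidableEq X] (i : X) (c : ℂ) :
    lp.single 2 i c = c • delta i := by
  rw [delta_eq, ← lp.single_smul]
  norm_num

lemma isClosed_nonneg_complex : IsClosed {z : ℂ | 0 ≤ z} := by
  have : {z : ℂ | 0 ≤ z} = Complex.re ⁻¹' (Set.Ici 0) ∩ Complex.im ⁻¹' {0} := by
    ext z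
    simp [Complex.le_def, eq_comm]
  rw [this]
  exact (isClosed_Ici.preimage Complex.continuous_re).inter
    (isClosed_singleton.preimage Complex.continuous_im)

/-- The finite propagation operators form a star subalgebra. -/
def propSA (X : Type) [MetricSpace X] : StarSubalgebra ℂ (ell2 X →L[ℂ] ell2 X) where
  carrier := {T | ∃ S : ℝ, HasPropagationLE T S}
  mul_mem' := by
    rintro A B ⟨S1, h1⟩ ⟨S2, h2⟩
    refine ⟨S1 + S2, fun x y hd => ?_⟩
    have key : (inner ℂ (delta x) ((A * B) (delta y)) : ℂ)
        = inner ℂ (ContinuousLinearMap.adjoint A (delta x)) (B (delta y)) := by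
      rw [ContinuousLinearMap.adjoint_inner_left]
      rfl
    rw [key, lp.inner_eq_tsum]
    have hz : ∀ z : X, (inner ℂ ((ContinuousLinearMap.adjoint A (delta x) : ∀ _ : X, ℂ) z)
        ((B (delta y) : ∀ _ : X, ℂ) z) : ℂ) = 0 := by
      intro z
      rcases le_or_gt (dist x z) S1 with hxz | hxz
      · have hzy : S2 < dist z y := by
          have := dist_triangle x z y
          linarith
        have hb : (B (delta y) : ∀ _ : X, ℂ) z = 0 := by
          rw [apply_coord]; exact h2 z y hzy
        simp [hb]
      · have ha : (ContinuousLinearMap.adjoint A (delta x) : ∀ _ : X, ℂ) z = 0 := by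
          rw [apply_coord, ContinuousLinearMap.adjoint_inner_right, ← inner_conj_symm,
            h1 x z hxz, map_zero]
        simp [ha]
    simp only [hz, tsum_zero]
  add_mem' := by
    rintro A B ⟨S1, h1⟩ ⟨S2, h2⟩
    refine ⟨max S1 S2, fun x y hd => ?_⟩
    have := h1 x y (lt_of_le_of_lt (le_max_left _ _) hd)
    have := h2 x y (lt_of_le_of_lt (le_max_right _ _) hd)
    simp only [ContinuousLinearMap.add_apply, inner_add_right, *, add_zero]
  algebraMap_mem' := by
    intro c
    refine ⟨0, fun x y hd => ?_⟩
    have hxy : x ≠ y := by rintro rfl; simp at hd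
    simp [Algebra.algebraMap_eq_smul_one, inner_smul_right, inner_delta_left, delta_apply_ne hxy]
  star_mem' := by
    rintro A ⟨S, hS⟩
    refine ⟨S, fun x y hd => ?_⟩
    rw [ContinuousLinearMap.star_eq_adjoint, ContinuousLinearMap.adjoint_inner_right,
      ← inner_conj_symm, hS y x (by rwa [dist_comm] at hd), map_zero]

section T
variable {u : X → X → ℂ} {T : ell2 X →L[ℂ] ell2 X}
  (hu : IsPositiveTypeKernelC u)
  (hconv : ∀ (ξ : ell2 X) (x : X),
    HasSum (fun y : X => u x y * (ξ : ∀ _ : X, ℂ) y) ((T ξ : ∀ _ : X, ℂ) x))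

include hconv in
lemma entry_eq (z x : X) : (T (delta x) : ∀ _ : X, ℂ) z = u z x := by
  classical
  refine (hconv (delta x) z).unique ?_
  have h0 : HasSum (fun y : X => if y = x then u z x else 0) (u z x) := hasSum_ite_eq x (u z x)
  convert h0 using 2 with y
  by_cases hyx : y = x
  · subst hyx; simp [delta_apply_self]
  · simp [delta_apply_ne hyx, hyx]

include hconv in
lemma inner_delta_T (z x : X) : (inner ℂ (delta z) (T (delta x)) : ℂ) = u z x := by
  rw [inner_delta_left, entry_eq hconv]

include hu hconv in
lemma T_inner_nonneg (ξ : ell2 X) : 0 ≤ (inner ℂ ξ (T ξ) : ℂ) := by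
  classical
  have hs : HasSum (fun i : X => lp.single 2 i ((ξ : ∀ _ : X, ℂ) i)) ξ :=
    lp.hasSum_single (by norm_num) ξ
  have hcont : Continuous fun v : ell2 X => (inner ℂ v (T v) : ℂ) :=
    continuous_id.inner T.continuous
  have hTend : Filter.Tendsto
      (fun s : Finset X => (inner ℂ (∑ i ∈ s, lp.single 2 i ((ξ : ∀ _ : X, ℂ) i))
        (T (∑ i ∈ s, lp.single 2 i ((ξ : ∀ _ : X, ℂ) i))) : ℂ))
      Filter.atTop (nhds (inner ℂ ξ (T ξ))) :=
    (hcont.tendsto ξ).comp hs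
  refine isClosed_nonneg_complex.mem_of_tendsto hTend (Filter.Eventually.of_forall fun s => ?_)
  show (0:ℂ) ≤ _
  have expand : (inner ℂ (∑ i ∈ s, lp.single 2 i ((ξ : ∀ _ : X, ℂ) i))
        (T (∑ i ∈ s, lp.single 2 i ((ξ : ∀ _ : X, ℂ) i))) : ℂ)
      = ∑ i ∈ s, ∑ j ∈ s, (starRingEnd ℂ) ((ξ : ∀ _ : X, ℂ) i) * ((ξ : ∀ _ : X, ℂ) j) * u i j := by
    simp only [single_eq_smul_delta, map_sum, map_smul, sum_inner, inner_sum,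
      inner_smul_left, inner_smul_right, inner_delta_T hconv]
    simp only [Finset.mul_sum]
    rw [Finset.sum_comm]
    exact Finset.sum_congr rfl fun i _ => Finset.sum_congr rfl fun j _ => by ring
  rw [expand]
  have e := s.equivFin
  have key := hu s.card (fun k => (e.symm k : X)) (fun k => (ξ : ∀ _ : X, ℂ) (e.symm k : X))
  convert key using 1
  have hsw : ∀ g : X → ℂ, ∑ i ∈ s, g i = ∑ k : Fin s.card, g (e.symm k) := fun g => by
    rw [← Finset.sum_coe_sort s g, ← Equiv.sum_comp e.symm (fun i : ↥s => g i)]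
  rw [hsw]
  exact Finset.sum_congr rfl fun k _ => hsw _

lemma aux_conj {z w : ℂ} (h : w = (starRingEnd ℂ) z) (hz : 0 ≤ z) :
    ((w.re : ℂ) = w) ∧ 0 ≤ w.re := by
  obtain ⟨hre, him⟩ := Complex.nonneg_iff.mp hz
  subst h
  refine ⟨Complex.ext (by simp) (by simp [← him]), by simpa using hre⟩

include hu hconv in
lemma T_nonneg : (0:ell2 X →L[ℂ] ell2 X) ≤ T := by
  rw [ContinuousLinearMap.nonneg_iff_isPositive, ContinuousLinearMap.isPositive_iff_complex]
  intro x
  have h' : (inner ℂ (T x) x : ℂ) = (starRingEnd ℂ) (inner ℂ x (T x)) := (inner_conj_symm _ _).symm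
  have := aux_conj h' (T_inner_nonneg hu hconv x)
  simpa using this
end T

end Aux

section Sqrt

variable {A : Type*} [CStarAlgebra A]

lemma cfc_mem_elemental' (a : A) [ha : IsStarNormal a] (f : ℂ → ℂ) :
    cfc f a ∈ StarAlgebra.elemental ℂ a := by
  by_cases hf : ContinuousOn f (spectrum ℂ a)
  · rw [cfc_apply f a, cfcHom_eq_of_isStarNormal]
    exact SetLike.coe_mem _
  · rw [cfc_apply_of_not_continuousOn a hf]
    exact zero_mem _

def mySqrt (a : A) : A := cfc (fun z : ℂ => ((Real.sqrt z.re : ℝ) : ℂ)) a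

lemma mySqrt_cont : Continuous (fun z : ℂ => ((Real.sqrt z.re : ℝ) : ℂ)) :=
  Complex.continuous_ofReal.comp (Real.continuous_sqrt.comp Complex.continuous_re)

lemma mySqrt_mem (a : A) [IsStarNormal a] : mySqrt a ∈ StarAlgebra.elemental ℂ a :=
  cfc_mem_elemental' a _

lemma mySqrt_isSelfAdjoint (a : A) [IsStarNormal a] : IsSelfAdjoint (mySqrt a) := by
  rw [IsSelfAdjoint, mySqrt, ← cfc_star]
  exact cfc_congr fun z _ => by simp [Complex.conj_ofReal]

variable [PartialOrder A] [StarOrderedRing A]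

lemma mySqrt_mul_self (a : A) (hpos : 0 ≤ a) [IsStarNormal a] : mySqrt a * mySqrt a = a := by
  rw [mySqrt, ← cfc_mul _ _ a (mySqrt_cont.continuousOn) (mySqrt_cont.continuousOn)]
  have h : (spectrum ℂ a).EqOn (fun z => ((Real.sqrt z.re : ℝ) : ℂ) * ((Real.sqrt z.re : ℝ) : ℂ))
      id := by
    intro z hz
    obtain ⟨hre, him⟩ := Complex.nonneg_iff.mp (spectrum_nonneg_of_nonneg hpos hz)
    show ((Real.sqrt z.re : ℝ) : ℂ) * ((Real.sqrt z.re : ℝ) : ℂ) = z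
    rw [← Complex.ofReal_mul, Real.mul_self_sqrt hre]
    exact Complex.ext (by simp) (by simp [← him])
  rw [cfc_congr h]
  exact cfc_id ℂ a

end Sqrt

/-- Bound on the difference of normalizations. -/
lemma normalize_diff {E : Type*} [NormedAddCommGroup E] [NormedSpace ℂ E]
    (a b : E) (ha : 0 < ‖a‖) (hb : 0 < ‖b‖) :
    ‖((‖a‖⁻¹ : ℝ) : ℂ) • a - ((‖b‖⁻¹ : ℝ) : ℂ) • b‖ ≤ 2 * ‖a - b‖ / ‖a‖ := by
  have key : ((‖a‖⁻¹ : ℝ) : ℂ) • a - ((‖b‖⁻¹ : ℝ) : ℂ) • b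
      = ((‖a‖⁻¹ : ℝ) : ℂ) • (a - b) + (((‖a‖⁻¹ - ‖b‖⁻¹ : ℝ)) : ℂ) • b := by
    rw [smul_sub, Complex.ofReal_sub, sub_smul]
    abel
  rw [key]
  have h1 : ‖((‖a‖⁻¹ : ℝ) : ℂ) • (a - b)‖ = ‖a - b‖ / ‖a‖ := by
    rw [norm_smul]
    simp [abs_of_nonneg (inv_nonneg.mpr (norm_nonneg a)), div_eq_inv_mul]
  have h2 : ‖(((‖a‖⁻¹ - ‖b‖⁻¹ : ℝ)) : ℂ) • b‖ ≤ ‖a - b‖ / ‖a‖ := by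
    rw [norm_smul]
    have hsub : ‖a‖⁻¹ - ‖b‖⁻¹ = (‖b‖ - ‖a‖) / (‖a‖ * ‖b‖) := by
      field_simp
    have hnorm : ‖(((‖a‖⁻¹ - ‖b‖⁻¹ : ℝ)) : ℂ)‖ = |‖b‖ - ‖a‖| / (‖a‖ * ‖b‖) := by
      rw [hsub, Complex.norm_real, Real.norm_eq_abs, abs_div,
        abs_of_pos (mul_pos ha hb)]
    rw [hnorm]
    have habs : |‖b‖ - ‖a‖| ≤ ‖a - b‖ := by
      have := abs_norm_sub_norm_le b a
      rwa [norm_sub_rev b a] at this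
    calc |‖b‖ - ‖a‖| / (‖a‖ * ‖b‖) * ‖b‖ = |‖b‖ - ‖a‖| / ‖a‖ := by
          field_simp
      _ ≤ ‖a - b‖ / ‖a‖ := by gcongr
  calc ‖((‖a‖⁻¹ : ℝ) : ℂ) • (a - b) + (((‖a‖⁻¹ - ‖b‖⁻¹ : ℝ)) : ℂ) • b‖
      ≤ ‖((‖a‖⁻¹ : ℝ) : ℂ) • (a - b)‖ + ‖(((‖a‖⁻¹ - ‖b‖⁻¹ : ℝ)) : ℂ) • b‖ := norm_add_le _ _
    _ ≤ ‖a - b‖ / ‖a‖ + ‖a - b‖ / ‖a‖ := by rw [h1]; gcongr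
    _ = 2 * ‖a - b‖ / ‖a‖ := by ring

theorem stmt3 (X : Type) [MetricSpace X]
    (hud : UniformlyDiscrete X) (hbg : BoundedGeometry X)
    (h : ∀ R > (0:ℝ), ∀ ε > (0:ℝ), ∃ u : X → X → ℂ,
      IsPositiveTypeKernelC u ∧
      (∀ x y : X, dist x y ≤ R → ‖u x y - 1‖ < ε) ∧
      ∃ T : ell2 X →L[ℂ] ell2 X, T ∈ uniformRoeAlgebra X ∧
        ∀ (ξ : ell2 X) (x : X),
          HasSum (fun y : X => u x y * (ξ : ∀ _ : X, ℂ) y) ((T ξ : ∀ _ : X, ℂ) x)) :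
    ∀ R > (0:ℝ), ∀ ε > (0:ℝ), ∃ ξ : X → ell2 X,
      (∀ x : X, ‖ξ x‖ = 1) ∧
      (∀ x y : X, dist x y ≤ R → ‖ξ x - ξ y‖ < ε) ∧
      ∃ S > (0:ℝ), ∀ x z : X, (ξ x : ∀ _ : X, ℂ) z ≠ 0 → dist x z ≤ S := by
  intro R hR ε hε
  classical
  set ε₀ := min ε 2 with hε₀def
  have hε₀pos : 0 < ε₀ := lt_min hε (by norm_num)
  have hε₀le2 : ε₀ ≤ 2 := min_le_right _ _
  have hε₀leε : ε₀ ≤ ε := min_le_left _ _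
  set d := ε₀ / 20 with hddef
  have hd0 : 0 < d := by positivity
  have hd1 : d ≤ 1/10 := by rw [hddef]; linarith
  obtain ⟨u, hu, hvar, T, hT, hconv⟩ := h R hR (d^2) (by positivity)
  have hTpos : (0 : ell2 X →L[ℂ] ell2 X) ≤ T := T_nonneg hu hconv
  have hTsa : IsSelfAdjoint T :=
    ((ContinuousLinearMap.nonneg_iff_isPositive T).mp hTpos).isSelfAdjoint
  haveI : IsStarNormal T := hTsa.isStarNormal
  set Q := mySqrt T with hQdef
  have hQsa : IsSelfAdjoint Q := mySqrt_isSelfAdjoint T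
  have hQQ : Q * Q = T := mySqrt_mul_self T hTpos
  -- matrix entries of Q * Q
  have hinner : ∀ x y : X, (inner ℂ (Q (delta x)) (Q (delta y)) : ℂ) = u x y := by
    intro x y
    have h1 : (inner ℂ (Q (delta x)) (Q (delta y)) : ℂ)
        = inner ℂ (delta x) (ContinuousLinearMap.adjoint Q (Q (delta y))) := by
      rw [ContinuousLinearMap.adjoint_inner_right]
    have hadj : ContinuousLinearMap.adjoint Q = Q := by
      rw [← ContinuousLinearMap.star_eq_adjoint]; exact hQsa
    rw [h1, hadj, ← ContinuousLinearMap.mul_apply, hQQ, inner_delta_T hconv]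
  -- real part bounds on the kernel
  have hre_bound : ∀ x y : X, dist x y ≤ R → |(u x y).re - 1| < d^2 := by
    intro x y hxy
    have habs := hvar x y hxy
    have h1 : |(u x y - 1).re| ≤ ‖u x y - 1‖ := by
      exact Complex.abs_re_le_norm _
    have h2 : (u x y - 1).re = (u x y).re - 1 := by simp
    calc |(u x y).re - 1| = |(u x y - 1).re| := by rw [h2]
      _ ≤ ‖u x y - 1‖ := h1
      _ < d^2 := habs
  -- norms of Q δ_x
  have hQnorm_sq : ∀ x : X, ‖Q (delta x)‖^2 = (u x x).re := by
    intro x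
    have h1 : (inner ℂ (Q (delta x)) (Q (delta x)) : ℂ) = ((‖Q (delta x)‖ : ℝ) : ℂ)^2 :=
      inner_self_eq_norm_sq_to_K _
    have h2 := (hinner x x).symm.trans h1
    have := congrArg Complex.re h2
    simpa [← Complex.ofReal_pow] using this.symm
  have hQnorm_lb : ∀ x : X, 9/10 ≤ ‖Q (delta x)‖ := by
    intro x
    have hb := hre_bound x x (by simp [hR.le])
    have hsq := hQnorm_sq x
    have h1 : 1 - d^2 ≤ ‖Q (delta x)‖^2 := by
      rw [hsq]
      have := abs_lt.mp hb
      linarith [this.1]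
    nlinarith [norm_nonneg (Q (delta x)), hd1, hd0.le]
  -- variation of Q δ_x
  have hQdiff : ∀ x y : X, dist x y ≤ R → ‖Q (delta x) - Q (delta y)‖ ≤ 2*d := by
    intro x y hxy
    have hsq : ‖Q (delta x) - Q (delta y)‖^2
        = ‖Q (delta x)‖^2 - 2 * (u x y).re + ‖Q (delta y)‖^2 := by
      have := norm_sub_sq (𝕜 := ℂ) (E := ell2 X) (Q (delta x)) (Q (delta y))
      rw [this, hinner x y]
      norm_num
    have hxx := hre_bound x x (by simp [hR.le])
    have hyy := hre_bound y y (by simp [hR.le])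
    have hxy' := hre_bound x y hxy
    rw [hQnorm_sq x, hQnorm_sq y] at hsq
    have h4 : ‖Q (delta x) - Q (delta y)‖^2 ≤ 4*d^2 := by
      rw [hsq]
      have h1 := abs_lt.mp hxx
      have h2 := abs_lt.mp hyy
      have h3 := abs_lt.mp hxy'
      linarith [h1.2, h2.2, h3.1]
    nlinarith [norm_nonneg (Q (delta x) - Q (delta y)), hd0.le]
  -- Q belongs to the Roe algebra, approximate by finite propagation T'
  have hTroe : T ∈ (propSA X).topologicalClosure := hT
  have hle : StarAlgebra.elemental ℂ T ≤ (propSA X).topologicalClosure :=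
    StarAlgebra.elemental.le_of_mem (StarSubalgebra.isClosed_topologicalClosure _) hTroe
  have hQroe : Q ∈ closure {T' : ell2 X →L[ℂ] ell2 X | ∃ S : ℝ, HasPropagationLE T' S} :=
    hle (mySqrt_mem T)
  obtain ⟨T', hT'mem, hT'close⟩ := Metric.mem_closure_iff.mp hQroe d hd0
  obtain ⟨S, hS⟩ := hT'mem
  set η : X → ell2 X := fun x => T' (delta x) with hηdef
  have hηQ : ∀ x : X, ‖η x - Q (delta x)‖ ≤ d := by
    intro x
    have h1 : η x - Q (delta x) = (T' - Q) (delta x) := by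
      simp [hηdef, ContinuousLinearMap.sub_apply]
    rw [h1]
    calc ‖(T' - Q) (delta x)‖ ≤ ‖T' - Q‖ * ‖delta x‖ := ContinuousLinearMap.le_opNorm _ _
      _ = ‖T' - Q‖ := by rw [norm_delta]; ring
      _ = dist Q T' := by rw [dist_eq_norm, norm_sub_rev]
      _ ≤ d := hT'close.le
  have hηlow : ∀ x : X, 7/10 ≤ ‖η x‖ := by
    intro x
    have h1 := hQnorm_lb x
    have h2 := hηQ x
    have h3 : ‖Q (delta x)‖ - ‖η x‖ ≤ ‖η x - Q (delta x)‖ := by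
      have := abs_norm_sub_norm_le (η x) (Q (delta x))
      have := abs_le.mp this
      linarith [this.1]
    linarith
  have hηpos : ∀ x : X, 0 < ‖η x‖ := fun x => lt_of_lt_of_le (by norm_num) (hηlow x)
  have hηdiff : ∀ x y : X, dist x y ≤ R → ‖η x - η y‖ ≤ 4*d := by
    intro x y hxy
    have h1 := hηQ x
    have h2 := hηQ y
    have h3 := hQdiff x y hxy
    calc ‖η x - η y‖
        = ‖(η x - Q (delta x)) + (Q (delta x) - Q (delta y)) + (Q (delta y) - η y)‖ := by
          congr 1; abel
      _ ≤ ‖(η x - Q (delta x)) + (Q (delta x) - Q (delta y))‖ + ‖Q (delta y) - η y‖ :=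
          norm_add_le _ _
      _ ≤ ‖η x - Q (delta x)‖ + ‖Q (delta x) - Q (delta y)‖ + ‖Q (delta y) - η y‖ := by
          gcongr; exact norm_add_le _ _
      _ ≤ d + 2*d + d := by
          gcongr
          rw [norm_sub_rev]
          exact h2
      _ = 4*d := by ring
  -- the normalized vectors
  refine ⟨fun x => ((‖η x‖⁻¹ : ℝ) : ℂ) • η x, ?_, ?_, ?_⟩
  · intro x
    rw [norm_smul]
    simp [abs_of_nonneg (inv_nonneg.mpr (norm_nonneg (η x))),
      inv_mul_cancel₀ (hηpos x).ne']
  · intro x y hxy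
    have hb := normalize_diff (η x) (η y) (hηpos x) (hηpos y)
    have hdiv : 2 * ‖η x - η y‖ / ‖η x‖ ≤ 2 * (4*d) / (7/10) := by
      apply div_le_div₀ (by positivity) (by linarith [hηdiff x y hxy]) (by norm_num) (hηlow x)
    have : 2 * (4*d) / (7/10) < ε := by
      rw [hddef]
      have : 2 * (4 * (ε₀/20)) / (7/10) = (4/7) * ε₀ := by ring
      rw [this]
      nlinarith
    linarith
  · refine ⟨max S 1, lt_of_lt_of_le one_pos (le_max_right _ _), ?_⟩
    intro x z hz
    have hηz : (η x : ∀ _ : X, ℂ) z ≠ 0 := by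
      intro h0
      apply hz
      have : ((((‖η x‖⁻¹ : ℝ) : ℂ) • η x : ell2 X) : ∀ _ : X, ℂ) z
          = ((‖η x‖⁻¹ : ℝ) : ℂ) * (η x : ∀ _ : X, ℂ) z := by
        rw [lp.coeFn_smul]
        rfl
      rw [this, h0, mul_zero]
    have : (inner ℂ (delta z) (T' (delta x)) : ℂ) ≠ 0 := by
      rw [inner_delta_left]
      exact hηz
    by_contra hcon
    push_neg at hcon
    have hlt : S < dist z x := by
      rw [dist_comm]
      exact lt_of_le_of_lt (le_max_left S 1) hcon
    exact this (hS z x hlt)
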